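/- Define $\chi_t(z) = \omega(t)^{-1} f_t(z)$ for $z \in \mathbb{C}_\infty$, where $f_t$ is the Anderson generating function and $\omega$ the Anderson–Thakur function. Then $\chi_t : \mathbb{C}_\infty \to \mathbb{T}$ is $\mathbb{F}_q$-linear and satisfies the bound $\|\chi_t(z)\| \leq \max\{1, |e_C(z)|^{1/q}\}$ for all $z \in \mathbb{C}_\infty$, where $\|\cdot\|$ is the Gauss norm on $\mathbb{T}$. -/

import Mathlib

noncomputable section

open Polynomial Filter PowerSeries

/-- `d_i = ∏_{j=0}^{i-1} (θ^{q^i} - θ^{q^j})`, with `d_0 = 1`. -/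
def carlitzD (Cinf : Type*) [Field Cinf] (θ : Cinf) (q i : ℕ) : Cinf :=
  ∏ j ∈ Finset.range i, (θ ^ q ^ i - θ ^ q ^ j)

/-- The Carlitz exponential `exp_C(z) = ∑_{i ≥ 0} d_i⁻¹ z^{q^i}`. -/
def expC (Cinf : Type*) [NormedField Cinf] (θ : Cinf) (q : ℕ) (z : Cinf) : Cinf :=
  ∑' i : ℕ, (carlitzD Cinf θ q i)⁻¹ * z ^ q ^ i

/-- `e_C(z) = exp_C(π̃ z)`. -/
def eC (Cinf : Type*) [NormedField Cinf] (θ π : Cinf) (q : ℕ) (z : Cinf) : Cinf :=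
  expC Cinf θ q (π * z)

/-- The `N`-th partial sum of the Anderson generating function
`f_t(z) = ∑_{n ≥ 0} (π̃ z)^{q^n} / ((θ^{q^n} - t) d_n)`, as a power series in `t`. -/
def ftPartial (Cinf : Type*) [NormedField Cinf] (θ π : Cinf) (q : ℕ) (z : Cinf) (N : ℕ) :
    PowerSeries Cinf :=
  ∑ n ∈ Finset.range N,
    PowerSeries.C (R := Cinf) ((π * z) ^ q ^ n * (carlitzD Cinf θ q n)⁻¹) *
      (PowerSeries.C (R := Cinf) (θ ^ q ^ n) - PowerSeries.X)⁻¹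

/-- The Gauss norm `‖∑ c_m t^m‖ = sup_m |c_m|` on `ℂ∞[[t]]` (finite on the Tate algebra). -/
def gaussNorm (Cinf : Type*) [NormedField Cinf] (f : PowerSeries Cinf) : ℝ :=
  ⨆ m : ℕ, ‖PowerSeries.coeff (R := Cinf) m f‖

/-!
Let `τ` act on `ℂ∞⟦t⟧` by raising every coefficient to the `q`-th power. Linearity of `χ_t`
holds already for the partial sums of `f_t`, since `z ↦ z ^ q ^ n` is `𝔽_q`-linear, and passes
to coefficientwise limits.

For the bound, write `F_N = ∑_{n < N} a_n / (θ^{q^n} - t)`, `a_n = (π̃ z)^{q^n} / d_n`, for the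
partial sums of `f_t` and `Ω_N` for the partial products of `ω`. From
`d_{n+1} = (θ^{q^{n+1}} - θ) d_n^q` one gets `τ F_N = ∑_{n ≤ N} a_n + (t - θ) F_{N+1}`, and
`λ_θ^q = -θ λ_θ` gives `τ Ω_N = (t - θ) Ω_{N+1}`. In the limit `τ f_t = e_C(z) + (t - θ) f_t`
and `τ ω = (t - θ) ω`, hence `τ χ_t = χ_t + e_C(z) / ((t - θ) ω)`. The coefficients of
`(t - θ) ω` are dominated by its constant term `-θ λ_θ`, of absolute value at least `1`, so
those of its inverse have absolute value at most `1`. Thus every coefficient `c` of `χ_t`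
satisfies `|c ^ q - c| ≤ |e_C(z)|`, which in an ultrametric field forces
`|c| ≤ max 1 |e_C(z)|^{1/q}`.
-/

open scoped PowerSeries.WithPiTopology Topology

/-- The partial products `λ_θ ∏_{i < N} (1 - t / θ^{q^i})⁻¹` of the Anderson–Thakur function. -/
def andersonThakurPartial (K : Type*) [Field K] (θ lam : K) (q N : ℕ) : PowerSeries K :=
  PowerSeries.C lam *
    ∏ i ∈ Finset.range N, (1 - PowerSeries.C (θ ^ q ^ i)⁻¹ * PowerSeries.X)⁻¹

namespace PowerSeries

open Finset

section Field

variable {k k' : Type*} [Field k] [Field k']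

theorem map_inv (f : k →+* k') (φ : k⟦X⟧) : map f φ⁻¹ = (map f φ)⁻¹ := by
  by_cases h : constantCoeff φ = 0
  · have h' : constantCoeff (map f φ) = 0 := by
      rw [← coeff_zero_eq_constantCoeff_apply, coeff_map, coeff_zero_eq_constantCoeff_apply, h,
        map_zero]
    rw [inv_eq_zero.2 h, inv_eq_zero.2 h', map_zero]
  · have h' : constantCoeff (map f φ) ≠ 0 := by
      rwa [← coeff_zero_eq_constantCoeff_apply, coeff_map, coeff_zero_eq_constantCoeff_apply,
        _root_.map_ne_zero]
    rw [eq_inv_iff_mul_eq_one h', ← map_mul, PowerSeries.inv_mul_cancel _ h, map_one]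

theorem X_sub_C_eq_C_mul_one_sub {θ : k} (hθ : θ ≠ 0) :
    (X - C θ : k⟦X⟧) = C (-θ) * (1 - C θ⁻¹ * X) := by
  have hθθ : -θ * θ⁻¹ = -1 := by rw [neg_mul, mul_inv_cancel₀ hθ]
  rw [mul_sub, mul_one, ← mul_assoc, ← map_mul, hθθ, map_neg, map_neg, map_one]
  ring

theorem map_sum_C_mul_inv_C_sub_X (φ : k →+* k) {a b : ℕ → k} (hb : ∀ n, b n ≠ 0)
    (hφb : ∀ n, φ (b n) = b (n + 1)) (hφa : ∀ n, φ (a n) = (b (n + 1) - b 0) * a (n + 1))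
    (N : ℕ) :
    map φ (∑ n ∈ range N, C (a n) * (C (b n) - X)⁻¹) =
      C (∑ n ∈ range (N + 1), a n) +
        (X - C (b 0)) * ∑ n ∈ range (N + 1), C (a n) * (C (b n) - X)⁻¹ := by
  have hkey : ∀ n, C (b n - b 0) * (C (b n) - X)⁻¹ = 1 + (X - C (b 0)) * (C (b n) - X)⁻¹ := by
    intro n
    rw [← PowerSeries.mul_inv_cancel (C (b n) - X) (by simpa using hb n), map_sub]
    ring
  calc map φ (∑ n ∈ range N, C (a n) * (C (b n) - X)⁻¹)
      = ∑ n ∈ range N, C (a (n + 1)) * (C (b (n + 1) - b 0) * (C (b (n + 1)) - X)⁻¹) := by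
        rw [map_sum]
        refine sum_congr rfl fun n _ => ?_
        rw [map_mul, map_C, hφa, map_inv, map_sub, map_C, map_X, hφb, map_mul]
        ring
    _ = ∑ n ∈ range (N + 1), C (a n) * (C (b n - b 0) * (C (b n) - X)⁻¹) := by
        rw [sum_range_succ' _ N, sub_self, map_zero, zero_mul, mul_zero, add_zero]
    _ = _ := by
        rw [mul_sum, map_sum, ← sum_add_distrib]
        refine sum_congr rfl fun n _ => ?_
        rw [hkey]
        ring

theorem map_prod_one_sub_C_inv_mul_X_inv (φ : k →+* k) {b : ℕ → k}
    (hφb : ∀ n, φ (b n) = b (n + 1)) (N : ℕ) :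
    map φ (∏ i ∈ range N, (1 - C (b i)⁻¹ * X)⁻¹) * (1 - C (b 0)⁻¹ * X)⁻¹ =
      ∏ i ∈ range (N + 1), (1 - C (b i)⁻¹ * X)⁻¹ := by
  rw [prod_range_succ', map_prod]
  congr 1
  refine prod_congr rfl fun i _ => ?_
  rw [map_inv, map_sub, map_one, map_mul, map_C, map_X, map_inv₀, hφb]

theorem map_inv_mul_eq_add_of_map_eq (φ : k →+* k) {u ω f : k⟦X⟧} {e : k}
    (hu : constantCoeff u ≠ 0) (hω : map φ ω = u * ω) (hf : map φ f = C e + u * f) :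
    map φ (ω⁻¹ * f) = ω⁻¹ * f + C e * (u * ω)⁻¹ := by
  rw [map_mul, map_inv, hω, hf, PowerSeries.mul_inv_rev]
  linear_combination (ω⁻¹ * f) * PowerSeries.inv_mul_cancel u hu

theorem map_andersonThakurPartial {θ lam : k} {q : ℕ} (φ : k →+* k)
    (hφ : ∀ x, φ x = x ^ q) (hθ : θ ≠ 0) (hq : 0 < q) (hlam : lam ^ (q - 1) = -θ)
    (N : ℕ) :
    map φ (andersonThakurPartial k θ lam q N) =
      (X - C θ) * andersonThakurPartial k θ lam q (N + 1) := by
  have hprod := map_prod_one_sub_C_inv_mul_X_inv φ (b := fun i => θ ^ q ^ i)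
    (fun n => by rw [hφ, ← pow_mul, ← pow_succ]) N
  simp only [pow_zero, pow_one] at hprod
  have hφlam : φ lam = -θ * lam := by rw [hφ, ← hlam, ← pow_succ, Nat.sub_add_cancel hq]
  rw [andersonThakurPartial, andersonThakurPartial, ← hprod, X_sub_C_eq_C_mul_one_sub hθ, map_mul,
    map_C, hφlam, map_mul]
  linear_combination -(C lam * map φ (∏ i ∈ range N, (1 - C (θ ^ q ^ i)⁻¹ * X)⁻¹)) * C (-θ) *
    PowerSeries.mul_inv_cancel (1 - C θ⁻¹ * X) (by simp)

end Field

section Ultrametric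

variable {K : Type*} [NormedField K] [IsUltrametricDist K]

theorem norm_coeff_mul_le {f g : K⟦X⟧} {r s : ℝ} (hf : ∀ m, ‖coeff m f‖ ≤ r)
    (hg : ∀ m, ‖coeff m g‖ ≤ s) (m : ℕ) : ‖coeff m (f * g)‖ ≤ r * s := by
  have hr : 0 ≤ r := (norm_nonneg _).trans (hf 0)
  have hs : 0 ≤ s := (norm_nonneg _).trans (hg 0)
  rw [coeff_mul]
  refine IsUltrametricDist.norm_sum_le_of_forall_le_of_nonneg (by positivity) fun i _ => ?_
  rw [norm_mul]
  exact mul_le_mul (hf _) (hg _) (norm_nonneg _) hr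

theorem norm_coeff_prod_le_one {ι : Type*} {s : Finset ι} {f : ι → K⟦X⟧}
    (hf : ∀ i ∈ s, ∀ m, ‖coeff m (f i)‖ ≤ 1) (m : ℕ) : ‖coeff m (∏ i ∈ s, f i)‖ ≤ 1 := by
  refine Finset.prod_induction f (fun g => ∀ m, ‖coeff m g‖ ≤ 1)
    (fun g h hg hh m => by simpa using norm_coeff_mul_le hg hh m) (fun m => ?_) hf m
  rw [coeff_one]
  split_ifs <;> simp

theorem norm_coeff_C_add_C_mul_X_le (a b : K) (m : ℕ) :
    ‖coeff m (C a + C b * X)‖ ≤ max ‖a‖ ‖b‖ := by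
  rw [map_add, coeff_C, coeff_C_mul, coeff_X]
  refine (IsUltrametricDist.norm_add_le_max _ _).trans (max_le_max ?_ ?_) <;>
    split_ifs <;> simp

theorem norm_coeff_inv_le {g : K⟦X⟧} (h0 : constantCoeff g ≠ 0)
    (hg : ∀ m, ‖coeff m g‖ ≤ ‖constantCoeff g‖) (m : ℕ) :
    ‖coeff m g⁻¹‖ ≤ ‖constantCoeff g‖⁻¹ := by
  induction m using Nat.strong_induction_on with
  | _ m ih =>
    rw [coeff_inv]
    split_ifs
    · rw [norm_inv]
    rw [norm_mul, norm_neg, norm_inv]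
    refine mul_le_of_le_one_right (by positivity) ?_
    refine IsUltrametricDist.norm_sum_le_of_forall_le_of_nonneg zero_le_one fun i _ => ?_
    split_ifs with hlt
    · rw [norm_mul]
      calc ‖coeff i.1 g‖ * ‖coeff i.2 g⁻¹‖ ≤ ‖constantCoeff g‖ * ‖constantCoeff g‖⁻¹ :=
            mul_le_mul (hg _) (ih _ hlt) (norm_nonneg _) (norm_nonneg _)
        _ = 1 := mul_inv_cancel₀ (norm_ne_zero_iff.2 h0)
    · simp

theorem norm_coeff_one_sub_C_mul_X_inv_le_one {a : K} (ha : ‖a‖ ≤ 1) (m : ℕ) :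
    ‖coeff m (1 - C a * X)⁻¹‖ ≤ 1 := by
  have hform : (1 - C a * X : K⟦X⟧) = C 1 + C (-a) * X := by simp [sub_eq_add_neg]
  have h0 : constantCoeff (1 - C a * X : K⟦X⟧) = 1 := by simp
  have hcoeff : ∀ m, ‖coeff m (1 - C a * X)‖ ≤ ‖constantCoeff (1 - C a * X : K⟦X⟧)‖ := by
    intro m
    rw [h0, norm_one, hform]
    exact (norm_coeff_C_add_C_mul_X_le _ _ m).trans (by simp [ha])
  simpa [h0] using norm_coeff_inv_le (h0 ▸ one_ne_zero) hcoeff m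

end Ultrametric

theorem tendsto_map {R S : Type*} [Semiring R] [Semiring S] [TopologicalSpace R]
    [TopologicalSpace S] {f : R →+* S} (hf : Continuous f) {ι : Type*} {l : Filter ι}
    {F : ι → R⟦X⟧} {g : R⟦X⟧} (h : Tendsto F l (𝓝 g)) :
    Tendsto (fun i => map f (F i)) l (𝓝 (map f g)) := by
  rw [WithPiTopology.tendsto_iff_coeff_tendsto] at h ⊢
  simp only [coeff_map]
  exact fun m => (hf.tendsto _).comp (h m)

end PowerSeries

theorem IsUltrametricDist.norm_le_max_one_rpow_of_norm_pow_sub_self_le {K : Type*}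
    [NormedField K] [IsUltrametricDist K] {q : ℕ} (hq : 1 < q) {c : K} {B : ℝ}
    (h : ‖c ^ q - c‖ ≤ B) : ‖c‖ ≤ max 1 (B ^ (1 / q : ℝ)) := by
  rcases le_or_gt ‖c‖ 1 with hc | hc
  · exact le_max_of_le_left hc
  have hlt : ‖c‖ < ‖c ^ q‖ := by
    rw [norm_pow]
    exact lt_self_pow₀ hc hq
  have hpow : ‖c‖ ^ q ≤ B := by
    rwa [sub_eq_add_neg, IsUltrametricDist.norm_add_eq_max_of_norm_ne_norm (by simpa using hlt.ne'),
      norm_neg, max_eq_left hlt.le, norm_pow] at h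
  refine le_max_of_le_right ?_
  calc ‖c‖ = (‖c‖ ^ q) ^ (1 / q : ℝ) := by
        rw [one_div, Real.pow_rpow_inv_natCast (norm_nonneg c) (by omega)]
    _ ≤ B ^ (1 / q : ℝ) := Real.rpow_le_rpow (by positivity) hpow (by positivity)

theorem RingHom.continuous_of_forall_eq_pow {R : Type*} [Semiring R] [TopologicalSpace R]
    [ContinuousMul R] (φ : R →+* R) {q : ℕ} (hφ : ∀ x, φ x = x ^ q) : Continuous φ := by
  rw [show ⇑φ = (· ^ q) from funext hφ]
  exact continuous_pow q

section Carlitz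

open Finset

variable {K : Type*} [NormedField K] {θ : K} {q : ℕ}

theorem carlitzD_succ (φ : K →+* K) (hφ : ∀ x, φ x = x ^ q) (n : ℕ) :
    carlitzD K θ q (n + 1) = (θ ^ q ^ (n + 1) - θ) * carlitzD K θ q n ^ q := by
  have hφθ : ∀ j, φ (θ ^ q ^ j) = θ ^ q ^ (j + 1) := fun j => by
    rw [hφ, ← pow_mul, ← pow_succ]
  rw [carlitzD, prod_range_succ', pow_zero, pow_one, mul_comm, carlitzD, ← hφ, map_prod]
  congr 1
  refine prod_congr rfl fun j _ => ?_
  rw [map_sub, hφθ, hφθ]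

variable [IsUltrametricDist K]

theorem norm_carlitzD (hθ : 1 < ‖θ‖) (hq : 1 < q) (n : ℕ) :
    ‖carlitzD K θ q n‖ = ‖θ‖ ^ (q ^ n * n) := by
  have hfactor : ∀ j ∈ range n, ‖θ ^ q ^ n - θ ^ q ^ j‖ = ‖θ‖ ^ q ^ n := by
    intro j hj
    have hlt : ‖θ ^ q ^ j‖ < ‖θ ^ q ^ n‖ := by
      rw [norm_pow, norm_pow]
      exact pow_lt_pow_right₀ hθ (Nat.pow_lt_pow_right hq (mem_range.1 hj))
    rw [sub_eq_add_neg, IsUltrametricDist.norm_add_eq_max_of_norm_ne_norm (by simpa using hlt.ne'),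
      norm_neg, max_eq_left hlt.le, norm_pow]
  rw [carlitzD, norm_prod, prod_congr rfl hfactor, prod_const, card_range, ← pow_mul]

theorem carlitzD_ne_zero (hθ : 1 < ‖θ‖) (hq : 1 < q) (n : ℕ) : carlitzD K θ q n ≠ 0 := by
  rw [← norm_pos_iff, norm_carlitzD hθ hq]
  exact pow_pos (zero_lt_one.trans hθ) _

theorem tendsto_inv_carlitzD_mul_pow (hθ : 1 < ‖θ‖) (hq : 1 < q) (w : K) :
    Tendsto (fun n => (carlitzD K θ q n)⁻¹ * w ^ q ^ n) atTop (𝓝 0) := by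
  rw [tendsto_zero_iff_norm_tendsto_zero]
  refine squeeze_zero' (Eventually.of_forall fun n => norm_nonneg _) ?_
    (tendsto_pow_atTop_nhds_zero_of_lt_one (r := (1 / 2 : ℝ)) (by norm_num) (by norm_num))
  have hsmall : ∀ᶠ n : ℕ in atTop, 2 * ‖w‖ ≤ ‖θ‖ ^ n :=
    (tendsto_pow_atTop_atTop_of_one_lt hθ).eventually_ge_atTop _
  filter_upwards [hsmall] with n hn
  have hθn : 0 < ‖θ‖ ^ n := by positivity
  have hratio : ‖w‖ / ‖θ‖ ^ n ≤ 1 / 2 := by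
    rw [div_le_div_iff₀ hθn two_pos]
    linarith
  calc ‖(carlitzD K θ q n)⁻¹ * w ^ q ^ n‖ = (‖w‖ / ‖θ‖ ^ n) ^ q ^ n := by
        rw [norm_mul, norm_inv, norm_carlitzD hθ hq, norm_pow, div_pow, ← pow_mul, mul_comm n,
          inv_mul_eq_div]
    _ ≤ (1 / 2) ^ q ^ n := pow_le_pow_left₀ (by positivity) hratio _
    _ ≤ (1 / 2) ^ n :=
        pow_le_pow_of_le_one (by norm_num) (by norm_num) (Nat.lt_pow_self hq).le

theorem hasSum_expC [CompleteSpace K] (hθ : 1 < ‖θ‖) (hq : 1 < q) (w : K) :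
    HasSum (fun n => (carlitzD K θ q n)⁻¹ * w ^ q ^ n) (expC K θ q w) :=
  (NonarchimedeanAddGroup.summable_of_tendsto_cofinite_zero
    (Nat.cofinite_eq_atTop ▸ tendsto_inv_carlitzD_mul_pow hθ hq w)).hasSum

end Carlitz

section FqLinear

open Finset

variable {Fq K : Type*} [Field Fq] [Fintype Fq] [NormedField K] [Algebra Fq K] (θ π : K)

theorem FiniteField.frobeniusAlgHom_pow_apply (n : ℕ) (x : K) :
    (FiniteField.frobeniusAlgHom Fq K ^ n) x = x ^ Fintype.card Fq ^ n := by
  rw [AlgHom.coe_pow, FiniteField.coe_frobeniusAlgHom, pow_iterate]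

theorem ftPartial_add (z w : K) (N : ℕ) :
    ftPartial K θ π (Fintype.card Fq) (z + w) N =
      ftPartial K θ π (Fintype.card Fq) z N + ftPartial K θ π (Fintype.card Fq) w N := by
  simp only [ftPartial, ← sum_add_distrib, ← add_mul, ← map_add, mul_add π,
    ← FiniteField.frobeniusAlgHom_pow_apply (Fq := Fq)]

theorem ftPartial_algebraMap_mul (c : Fq) (z : K) (N : ℕ) :
    ftPartial K θ π (Fintype.card Fq) (algebraMap Fq K c * z) N =
      PowerSeries.C (algebraMap Fq K c) * ftPartial K θ π (Fintype.card Fq) z N := by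
  rw [ftPartial, ftPartial, mul_sum]
  refine sum_congr rfl fun n _ => ?_
  rw [mul_left_comm π, mul_pow, ← map_pow, FiniteField.pow_card_pow, mul_assoc, map_mul, mul_assoc]

end FqLinear

namespace PowerSeries

open Finset

section Bounds

variable {K : Type*} [NormedField K] [IsUltrametricDist K] {θ lam : K} {q : ℕ} {ω : K⟦X⟧}

theorem constantCoeff_eq_of_tendsto_andersonThakurPartial
    (hω : Tendsto (andersonThakurPartial K θ lam q) atTop (𝓝 ω)) : constantCoeff ω = lam := by
  refine tendsto_nhds_unique ((WithPiTopology.continuous_constantCoeff K).tendsto ω |>.comp hω) ?_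
  simp [Function.comp_def, andersonThakurPartial, map_prod]

theorem norm_coeff_andersonThakurPartial_le (hθ : 1 ≤ ‖θ‖) (N m : ℕ) :
    ‖coeff m (andersonThakurPartial K θ lam q N)‖ ≤ ‖lam‖ := by
  rw [andersonThakurPartial, coeff_C_mul, norm_mul]
  refine mul_le_of_le_one_right (norm_nonneg _) (norm_coeff_prod_le_one (fun i _ => ?_) m)
  refine norm_coeff_one_sub_C_mul_X_inv_le_one ?_
  rw [norm_inv, norm_pow]
  exact inv_le_one_of_one_le₀ (one_le_pow₀ hθ)

theorem norm_coeff_le_of_tendsto_andersonThakurPartial (hθ : 1 ≤ ‖θ‖)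
    (hω : Tendsto (andersonThakurPartial K θ lam q) atTop (𝓝 ω)) (m : ℕ) :
    ‖coeff m ω‖ ≤ ‖lam‖ :=
  le_of_tendsto' ((continuous_norm.comp (WithPiTopology.continuous_coeff K m)).tendsto ω |>.comp hω)
    fun N => norm_coeff_andersonThakurPartial_le hθ N m

theorem norm_coeff_inv_X_sub_C_mul_le_one (hθ : 1 < ‖θ‖) (hlam : lam ^ (q - 1) = -θ)
    (hω : Tendsto (andersonThakurPartial K θ lam q) atTop (𝓝 ω)) (m : ℕ) :
    ‖coeff m ((X - C θ) * ω)⁻¹‖ ≤ 1 := by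
  have hlam1 : 1 ≤ ‖lam‖ := by
    by_contra! h
    have : ‖lam ^ (q - 1)‖ ≤ 1 := by rw [norm_pow]; exact pow_le_one₀ (norm_nonneg _) h.le
    rw [hlam, norm_neg] at this
    linarith
  have hnorm0 : ‖constantCoeff ((X - C θ) * ω)‖ = ‖θ‖ * ‖lam‖ := by
    simp [constantCoeff_eq_of_tendsto_andersonThakurPartial hω]
  have hXC (m : ℕ) : ‖coeff m (X - C θ)‖ ≤ ‖θ‖ := by
    rw [show (X - C θ : K⟦X⟧) = C (-θ) + C 1 * X by simp [sub_eq_neg_add]]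
    exact (norm_coeff_C_add_C_mul_X_le _ _ m).trans (by simp [hθ.le])
  have h0 : constantCoeff ((X - C θ) * ω) ≠ 0 := by
    rw [← norm_pos_iff, hnorm0]
    positivity
  refine (norm_coeff_inv_le h0 (fun m => ?_) m).trans ?_
  · rw [hnorm0]
    exact norm_coeff_mul_le hXC (norm_coeff_le_of_tendsto_andersonThakurPartial hθ.le hω) m
  · rw [hnorm0]
    exact inv_le_one_of_one_le₀ (one_le_mul_of_one_le_of_one_le hθ.le hlam1)

end Bounds

section FrobeniusDifferenceEquations

variable {K : Type*} [NormedField K] {θ lam : K} {q : ℕ} (φ : K →+* K)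

theorem map_eq_of_tendsto_andersonThakurPartial (hφ : ∀ x, φ x = x ^ q) (hθ : θ ≠ 0)
    (hq : 0 < q) (hlam : lam ^ (q - 1) = -θ) {ω : K⟦X⟧}
    (hω : Tendsto (andersonThakurPartial K θ lam q) atTop (𝓝 ω)) :
    map φ ω = (X - C θ) * ω := by
  refine tendsto_nhds_unique (tendsto_map (φ.continuous_of_forall_eq_pow hφ) hω) ?_
  simp only [map_andersonThakurPartial φ hφ hθ hq hlam]
  exact (hω.comp (tendsto_add_atTop_nat 1)).const_mul _

variable [IsUltrametricDist K]

theorem map_ftPartial (hφ : ∀ x, φ x = x ^ q) (hθ : 1 < ‖θ‖) (hq : 1 < q) (π z : K) (N : ℕ) :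
    map φ (ftPartial K θ π q z N) =
      C (∑ n ∈ range (N + 1), (π * z) ^ q ^ n * (carlitzD K θ q n)⁻¹) +
        (X - C θ) * ftPartial K θ π q z (N + 1) := by
  have hθ0 : θ ≠ 0 := norm_pos_iff.1 (zero_lt_one.trans hθ)
  have hφa : ∀ n, φ ((π * z) ^ q ^ n * (carlitzD K θ q n)⁻¹) =
      (θ ^ q ^ (n + 1) - θ ^ q ^ 0) * ((π * z) ^ q ^ (n + 1) * (carlitzD K θ q (n + 1))⁻¹) := by
    intro n
    have hd := carlitzD_ne_zero hθ hq (n + 1)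
    rw [carlitzD_succ φ hφ] at hd ⊢
    rw [map_mul, map_inv₀, hφ, hφ, ← pow_mul, ← pow_succ, pow_zero, pow_one]
    field_simp [left_ne_zero_of_mul hd, right_ne_zero_of_mul hd]
  simpa only [ftPartial, pow_zero, pow_one] using
    map_sum_C_mul_inv_C_sub_X φ (fun n => pow_ne_zero _ hθ0)
      (fun n => by rw [hφ, ← pow_mul, ← pow_succ]) hφa N

theorem map_eq_of_tendsto_ftPartial [CompleteSpace K] (hφ : ∀ x, φ x = x ^ q) (hθ : 1 < ‖θ‖)
    (hq : 1 < q) {π z : K} {f : K⟦X⟧} (hf : Tendsto (ftPartial K θ π q z) atTop (𝓝 f)) :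
    map φ f = C (eC K θ π q z) + (X - C θ) * f := by
  have hsum : Tendsto (fun N => ∑ n ∈ range (N + 1), (π * z) ^ q ^ n * (carlitzD K θ q n)⁻¹)
      atTop (𝓝 (eC K θ π q z)) := by
    simp_rw [mul_comm _ (carlitzD K θ q _)⁻¹]
    exact (hasSum_expC hθ hq (π * z)).tendsto_sum_nat.comp (tendsto_add_atTop_nat 1)
  refine tendsto_nhds_unique (tendsto_map (φ.continuous_of_forall_eq_pow hφ) hf) ?_
  simp only [map_ftPartial φ hφ hθ hq]
  exact ((WithPiTopology.continuous_C.tendsto _).comp hsum).add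
    ((hf.comp (tendsto_add_atTop_nat 1)).const_mul _)

theorem norm_coeff_le_of_map_eq_add (hφ : ∀ x, φ x = x ^ q) (hq : 1 < q) {χ h : K⟦X⟧}
    {e : K} (hχ : map φ χ = χ + C e * h) (hh : ∀ m, ‖coeff m h‖ ≤ 1) (m : ℕ) :
    ‖coeff m χ‖ ≤ max 1 (‖e‖ ^ (1 / q : ℝ)) := by
  refine IsUltrametricDist.norm_le_max_one_rpow_of_norm_pow_sub_self_le hq ?_
  have hm := congrArg (coeff m) hχ
  rw [coeff_map, hφ, map_add, coeff_C_mul] at hm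
  rw [hm, add_sub_cancel_left, norm_mul]
  exact mul_le_of_le_one_right (norm_nonneg _) (hh m)

end FrobeniusDifferenceEquations

end PowerSeries

theorem statement13_general
    (Fq : Type*) [Field Fq] [Fintype Fq]
    (Cinf : Type*) [NormedField Cinf] [CompleteSpace Cinf]
    [IsUltrametricDist Cinf] [Algebra Fq Cinf] (θ : Cinf)
    (q : ℕ) (hq : q = Fintype.card Fq) (hθ : ‖θ‖ = (q : ℝ))
    (π : Cinf)
    (lam : Cinf) (hlam : lam ^ (q - 1) = -θ)
    (ω : PowerSeries Cinf)
    (hω : ∀ m : ℕ,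
      Tendsto
        (fun N : ℕ => PowerSeries.coeff (R := Cinf) m
          (PowerSeries.C (R := Cinf) lam *
            ∏ i ∈ Finset.range N,
              (1 - PowerSeries.C (R := Cinf) ((θ ^ q ^ i)⁻¹) * PowerSeries.X)⁻¹))
        atTop (nhds (PowerSeries.coeff (R := Cinf) m ω)))
    (ft : Cinf → PowerSeries Cinf)
    (hft : ∀ (z : Cinf) (m : ℕ),
      Tendsto (fun N : ℕ => PowerSeries.coeff (R := Cinf) m (ftPartial Cinf θ π q z N))
        atTop (nhds (PowerSeries.coeff (R := Cinf) m (ft z))))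
    (chi : Cinf → PowerSeries Cinf)
    (hchi : ∀ z : Cinf, chi z = ω⁻¹ * ft z) :
    (∀ z w : Cinf, chi (z + w) = chi z + chi w) ∧
    (∀ (c : Fq) (z : Cinf),
      chi (algebraMap Fq Cinf c * z) = PowerSeries.C (R := Cinf) (algebraMap Fq Cinf c) * chi z) ∧
    (∀ z : Cinf,
      gaussNorm Cinf (chi z) ≤ max 1 (‖eC Cinf θ π q z‖ ^ ((1 : ℝ) / (q : ℝ)))) := by
  subst hq
  have hq1 : 1 < Fintype.card Fq := Fintype.one_lt_card
  have hθ1 : 1 < ‖θ‖ := by rw [hθ]; exact_mod_cast hq1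
  have hθ0 : θ ≠ 0 := norm_pos_iff.1 (zero_lt_one.trans hθ1)
  have hft' (z : Cinf) : Tendsto (ftPartial Cinf θ π _ z) atTop (𝓝 (ft z)) :=
    (PowerSeries.WithPiTopology.tendsto_iff_coeff_tendsto _ _ _ _).2 (hft z)
  have hω' : Tendsto (andersonThakurPartial Cinf θ lam _) atTop (𝓝 ω) :=
    (PowerSeries.WithPiTopology.tendsto_iff_coeff_tendsto _ _ _ _).2 hω
  have hft_add (z w : Cinf) : ft (z + w) = ft z + ft w :=
    tendsto_nhds_unique ((hft' _).congr fun N => ftPartial_add θ π z w N) ((hft' z).add (hft' w))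
  have hft_smul (c : Fq) (z : Cinf) :
      ft (algebraMap Fq Cinf c * z) = PowerSeries.C (algebraMap Fq Cinf c) * ft z :=
    tendsto_nhds_unique ((hft' _).congr fun N => ftPartial_algebraMap_mul θ π c z N)
      ((hft' z).const_mul _)
  refine ⟨fun z w => by rw [hchi, hchi, hchi, hft_add, mul_add],
    fun c z => by rw [hchi, hchi, hft_smul, mul_left_comm], fun z => ?_⟩
  let φ : Cinf →+* Cinf := FiniteField.frobeniusAlgHom Fq Cinf
  have hφ (x : Cinf) : φ x = x ^ Fintype.card Fq := rfl
  have hχ : PowerSeries.map φ (chi z) = chi z +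
      PowerSeries.C (eC Cinf θ π (Fintype.card Fq) z) * ((PowerSeries.X - PowerSeries.C θ) * ω)⁻¹ := by
    rw [hchi]
    exact PowerSeries.map_inv_mul_eq_add_of_map_eq φ (by simpa using hθ0)
      (PowerSeries.map_eq_of_tendsto_andersonThakurPartial φ hφ hθ0 (by omega) hlam hω')
      (PowerSeries.map_eq_of_tendsto_ftPartial φ hφ hθ1 hq1 (hft' z))
  exact ciSup_le (PowerSeries.norm_coeff_le_of_map_eq_add φ hφ hq1 hχ
    (PowerSeries.norm_coeff_inv_X_sub_C_mul_le_one hθ1 hlam hω'))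

/-- the function `χ_t(z) = ω(t)⁻¹ f_t(z)` is `𝔽_q`-linear in `z` and
satisfies `‖χ_t(z)‖ ≤ max{1, |e_C(z)|^{1/q}}` for all `z ∈ ℂ∞` (Gauss norm on `𝕋`). -/
theorem statement13
    (Fq : Type*) [Field Fq] [Fintype Fq]
    (Cinf : Type*) [NormedField Cinf] [CompleteSpace Cinf] [IsAlgClosed Cinf]
    [IsUltrametricDist Cinf] [Algebra Fq Cinf] (θ : Cinf)
    (q : ℕ) (hq : q = Fintype.card Fq) (hθ : ‖θ‖ = (q : ℝ))
    (π : Cinf) (hπ : ‖π‖ = (q : ℝ) ^ ((q : ℝ) / ((q : ℝ) - 1)))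
    (hker : ∀ z : Cinf, expC Cinf θ q z = 0 ↔ ∃ a : Polynomial Fq, z = π * aeval θ a)
    (lam : Cinf) (hlam : lam ^ (q - 1) = -θ)
    (ω : PowerSeries Cinf)
    (hω : ∀ m : ℕ,
      Tendsto
        (fun N : ℕ => PowerSeries.coeff (R := Cinf) m
          (PowerSeries.C (R := Cinf) lam *
            ∏ i ∈ Finset.range N,
              (1 - PowerSeries.C (R := Cinf) ((θ ^ q ^ i)⁻¹) * PowerSeries.X)⁻¹))
        atTop (nhds (PowerSeries.coeff (R := Cinf) m ω)))
    (ft : Cinf → PowerSeries Cinf)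
    (hft : ∀ (z : Cinf) (m : ℕ),
      Tendsto (fun N : ℕ => PowerSeries.coeff (R := Cinf) m (ftPartial Cinf θ π q z N))
        atTop (nhds (PowerSeries.coeff (R := Cinf) m (ft z))))
    (chi : Cinf → PowerSeries Cinf)
    (hchi : ∀ z : Cinf, chi z = ω⁻¹ * ft z) :
    (∀ z w : Cinf, chi (z + w) = chi z + chi w) ∧
    (∀ (c : Fq) (z : Cinf),
      chi (algebraMap Fq Cinf c * z) = PowerSeries.C (R := Cinf) (algebraMap Fq Cinf c) * chi z) ∧
    (∀ z : Cinf,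
      gaussNorm Cinf (chi z) ≤ max 1 (‖eC Cinf θ π q z‖ ^ ((1 : ℝ) / (q : ℝ)))) :=
  statement13_general Fq Cinf θ q hq hθ π lam hlam ω hω ft hft chi hchi
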